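/- arXiv:2305.05822 — 8 statements merged into one kernel-verified Lean document; each statement's English description precedes it below -/
import Mathlib

section
/- For a nonempty subset S of the valuations {v_1,...,v_K} with 0 < v_1 < ... < v_K, the extreme market x^S (defined by x^S_i = 0 if v_i ∉ S; x^S_i = (min S)(1/v_i − 1/μ(v_i,S)) if v_i ∈ S, v_i ≠ max S; x^S_i = (min S)/(max S) if v_i = max S) satisfies: for every v_k ∈ S, the revenue v_k * (sum_{j ≥ k} x^S_j) equals min S. In particular, the monopolist is indifferent between charging any price in S, and every price in S is optimal for x^S. -/
open Finset

/-- Proportion of consumers with valuation ≥ v k. -/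
def barSum {K : ℕ} (x : Fin K → ℝ) (k : Fin K) : ℝ := ∑ j ∈ Finset.Ici k, x j

/-- A market is a probability distribution over the K valuations. -/
def IsMarket {K : ℕ} (x : Fin K → ℝ) : Prop := (∀ i, 0 ≤ x i) ∧ ∑ i, x i = 1

/-- Price v k is optimal for market x. -/
def OptimalPrice {K : ℕ} (v x : Fin K → ℝ) (k : Fin K) : Prop :=
  ∀ i, v i * barSum x i ≤ v k * barSum x k

/-- v k is the largest optimal price for x (tie-breaking against consumers). -/
def LargestOptimal {K : ℕ} (v x : Fin K → ℝ) (k : Fin K) : Prop :=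
  OptimalPrice v x k ∧ ∀ j, OptimalPrice v x j → j ≤ k

/-- μ(v i, S): smallest element of S strictly greater than i (junk value i if none). -/
noncomputable def nextIn {K : ℕ} (S : Finset (Fin K)) (i : Fin K) : Fin K :=
  if h : (S.filter (fun j => i < j)).Nonempty then (S.filter (fun j => i < j)).min' h else i

/-- The extreme market x^S of Bergemann–Brooks–Morris. -/
noncomputable def extreme {K : ℕ} (v : Fin K → ℝ) (S : Finset (Fin K)) (hS : S.Nonempty) :
    Fin K → ℝ := fun i =>
  if i ∉ S then 0
  else if i = S.max' hS then v (S.min' hS) / v (S.max' hS)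
  else v (S.min' hS) * (1 / v i - 1 / v (nextIn S i))

/-- A segmentation σ with label weights f is consistent with aggregate market x. -/
def Consistent {K n : ℕ} (x : Fin K → ℝ) (f : Fin n → ℝ) (σ : Fin n → Fin K → ℝ) : Prop :=
  (∀ s, IsMarket (σ s)) ∧ ∀ k, ∑ s, f s * σ s k = x k

/-- The lower bound λ̲. -/
noncomputable def lamLow {K : ℕ} (v x : Fin K → ℝ) (istar : Fin K)
    (hIoi : (Finset.Ioi istar).Nonempty) : ℝ :=
  (Finset.Iic istar).inf' ⟨istar, Finset.mem_Iic.mpr le_rfl⟩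
    (fun j => ((Finset.Ioi istar).sup' hIoi fun i => v i * barSum x i) / v j + 1 - barSum x j)

/-- The upper bound λ̄. -/
noncomputable def lamHigh {K : ℕ} (v x : Fin K → ℝ) (istar : Fin K)
    (hIio : (Finset.Iio istar).Nonempty) : ℝ :=
  (Finset.Iio istar).sup' hIio
    (fun j => 1 - (v istar * barSum x istar - v j * barSum x j) / (v istar - v j))

/-- Consumer surplus of segmentation σ with weights f when prices p are charged. -/
def CS {K n : ℕ} (v : Fin K → ℝ) (f : Fin n → ℝ) (σ : Fin n → Fin K → ℝ)
    (p : Fin n → Fin K) : ℝ :=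
  ∑ s, f s * ∑ j ∈ Finset.Ici (p s), (v j - v (p s)) * σ s j

section Aux
variable {K : ℕ} (v : Fin K → ℝ) (S : Finset (Fin K)) (hS : S.Nonempty)

lemma extreme_zero {j : Fin K} (hj : j ∉ S) : extreme v S hS j = 0 := by
  simp [extreme, hj]

lemma barSum_extreme_aux (hmono : StrictMono v) (hpos : ∀ i, 0 < v i) :
    ∀ n : ℕ, ∀ k, k ∈ S → K - k.val ≤ n →
      barSum (extreme v S hS) k = v (S.min' hS) / v k := by
  intro n
  induction n with
  | zero => intro k hk h; exact absurd h (by omega)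
  | succ n ih =>
    intro k hk hn
    by_cases hM : k = S.max' hS
    · have : barSum (extreme v S hS) k = extreme v S hS k := by
        unfold barSum
        refine Finset.sum_eq_single_of_mem k (Finset.mem_Ici.mpr le_rfl) ?_
        intro j hj hne
        have hjk : k < j := lt_of_le_of_ne (Finset.mem_Ici.mp hj) (Ne.symm hne)
        refine extreme_zero v S hS (fun hjS => ?_)
        exact absurd (S.le_max' j hjS) (by rw [← hM]; exact not_le.mpr hjk)
      rw [this]
      simp [extreme, hM, S.max'_mem hS]
    · have hkM : k < S.max' hS := lt_of_le_of_ne (S.le_max' k hk) hM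
      have hne : (S.filter (fun j => k < j)).Nonempty :=
        ⟨S.max' hS, Finset.mem_filter.mpr ⟨S.max'_mem hS, hkM⟩⟩
      set k' := nextIn S k with hk'def
      have hk'eq : k' = (S.filter (fun j => k < j)).min' hne := by
        simp [hk'def, nextIn, hne]
      have hk'mem : k' ∈ S ∧ k < k' := by
        have := (S.filter (fun j => k < j)).min'_mem hne
        rw [← hk'eq] at this
        exact ⟨(Finset.mem_filter.mp this).1, (Finset.mem_filter.mp this).2⟩
      have hk'min : ∀ j ∈ S, k < j → k' ≤ j := by
        intro j hjS hkj
        rw [hk'eq]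
        exact Finset.min'_le _ _ (Finset.mem_filter.mpr ⟨hjS, hkj⟩)
      have hstep : barSum (extreme v S hS) k
          = extreme v S hS k + barSum (extreme v S hS) k' := by
        unfold barSum
        rw [Finset.Ici_eq_cons_Ioi, Finset.sum_cons]
        congr 1
        refine (Finset.sum_subset ?_ ?_).symm
        · intro j hj
          exact Finset.mem_Ioi.mpr (lt_of_lt_of_le hk'mem.2 (Finset.mem_Ici.mp hj))
        · intro j hj hj'
          refine extreme_zero v S hS (fun hjS => ?_)
          exact hj' (Finset.mem_Ici.mpr (hk'min j hjS (Finset.mem_Ioi.mp hj)))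
      have hIH : barSum (extreme v S hS) k' = v (S.min' hS) / v k' := by
        refine ih k' hk'mem.1 ?_
        have : k.val < k'.val := hk'mem.2
        have : k.val < K := k.isLt
        omega
      have hxk : extreme v S hS k = v (S.min' hS) * (1 / v k - 1 / v k') := by
        simp [extreme, hk, hM, hk'def]
      rw [hstep, hIH, hxk]
      have h1 : v k ≠ 0 := ne_of_gt (hpos k)
      have h2 : v k' ≠ 0 := ne_of_gt (hpos k')
      field_simp
      ring

end Aux

/-- on the extreme market x^S every price in S yields revenue min S,
so the monopolist is indifferent among prices in S, and each price in S is optimal. -/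
theorem extreme_revenue_const {K : ℕ} (v : Fin K → ℝ) (hmono : StrictMono v)
    (hpos : ∀ i, 0 < v i) (S : Finset (Fin K)) (hS : S.Nonempty) :
    (∀ k ∈ S, v k * barSum (extreme v S hS) k = v (S.min' hS)) ∧
    (∀ k ∈ S, OptimalPrice v (extreme v S hS) k) := by
  have key : ∀ k ∈ S, barSum (extreme v S hS) k = v (S.min' hS) / v k := by
    intro k hk
    exact barSum_extreme_aux v S hS hmono hpos K k hk (by omega)
  have part1 : ∀ k ∈ S, v k * barSum (extreme v S hS) k = v (S.min' hS) := by
    intro k hk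
    rw [key k hk, mul_comm, div_mul_cancel₀ _ (ne_of_gt (hpos k))]
  refine ⟨part1, ?_⟩
  intro k hk i
  rw [part1 k hk]
  by_cases hne : (S.filter (fun j => i ≤ j)).Nonempty
  · set k' := (S.filter (fun j => i ≤ j)).min' hne with hk'
    have hmem := Finset.mem_filter.mp ((S.filter (fun j => i ≤ j)).min'_mem hne)
    have hbar : barSum (extreme v S hS) i = barSum (extreme v S hS) k' := by
      unfold barSum
      refine (Finset.sum_subset ?_ ?_).symm
      · intro j hj
        exact Finset.mem_Ici.mpr (le_trans hmem.2 (Finset.mem_Ici.mp hj))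
      · intro j hj hj'
        refine extreme_zero v S hS (fun hjS => ?_)
        exact hj' (Finset.mem_Ici.mpr (Finset.min'_le _ _
          (Finset.mem_filter.mpr ⟨hjS, Finset.mem_Ici.mp hj⟩)))
    rw [hbar, key k' hmem.1]
    have hvi : v i ≤ v k' := hmono.le_iff_le.mpr hmem.2
    have h0 : 0 < v k' := hpos k'
    have hm : 0 < v (S.min' hS) := hpos _
    calc v i * (v (S.min' hS) / v k') ≤ v k' * (v (S.min' hS) / v k') := by
          exact mul_le_mul_of_nonneg_right hvi (le_of_lt (div_pos hm h0))
      _ = v (S.min' hS) := by rw [mul_comm, div_mul_cancel₀ _ (ne_of_gt h0)]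
  · have : barSum (extreme v S hS) i = 0 := by
      unfold barSum
      refine Finset.sum_eq_zero (fun j hj => ?_)
      refine extreme_zero v S hS (fun hjS => ?_)
      exact hne ⟨j, Finset.mem_filter.mpr ⟨hjS, Finset.mem_Ici.mp hj⟩⟩
    rw [this, mul_zero]
    exact le_of_lt (hpos _)
end

section
/- Let x* be a market with uniform monopoly price v_{i*} (the largest optimal price), and suppose a segmentation σ with label weights f (f_s > 0, sum to 1) is consistent with x*, i.e., sum_s f_s σ(·|s) = x*. If in some segment s a price v_k with v_k > v_{i*} is optimal for σ(·|s), then for every v_i ≤ v_{i*}: f_s ≤ (v_k * x̄*_k)/v_i + 1 − x̄*_i, where x̄*_j = sum_{l ≥ j} x*_l. -/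
open Finset

lemma barSum_nonneg {K : ℕ} {x : Fin K → ℝ} (hx : ∀ i, 0 ≤ x i) (k : Fin K) :
    0 ≤ barSum x k := Finset.sum_nonneg fun j _ => hx j

lemma barSum_le_one {K : ℕ} {x : Fin K → ℝ} (hx : IsMarket x) (k : Fin K) :
    barSum x k ≤ 1 := by
  rw [← hx.2]
  exact Finset.sum_le_sum_of_subset_of_nonneg (Finset.subset_univ _)
    (fun j _ _ => hx.1 j)

lemma barSum_agg {K n : ℕ} {x : Fin K → ℝ} {f : Fin n → ℝ} {σ : Fin n → Fin K → ℝ}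
    (hcons : Consistent x f σ) (i : Fin K) :
    barSum x i = ∑ t, f t * barSum (σ t) i := by
  unfold barSum
  simp_rw [Finset.mul_sum]
  rw [Finset.sum_comm]
  exact Finset.sum_congr rfl fun j _ => (hcons.2 j).symm

/-- if a price above the uniform monopoly price is optimal in segment s,
then f s is bounded above. -/
theorem weight_bound_of_high_price {K n : ℕ} (v : Fin K → ℝ) (hmono : StrictMono v)
    (hpos : ∀ i, 0 < v i) (x : Fin K → ℝ) (hx : IsMarket x)
    (istar : Fin K) (histar : LargestOptimal v x istar)
    (f : Fin n → ℝ) (σ : Fin n → Fin K → ℝ)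
    (hfpos : ∀ s, 0 < f s) (hfsum : ∑ s, f s = 1)
    (hcons : Consistent x f σ)
    (s : Fin n) (k : Fin K) (hk : istar < k) (hopt : OptimalPrice v (σ s) k) :
    ∀ i ≤ istar, f s ≤ v k * barSum x k / v i + 1 - barSum x i := by
  intro i hi
  have hvi := hpos i
  have hσ0 : ∀ t (j : Fin K), 0 ≤ barSum (σ t) j :=
    fun t j => barSum_nonneg (hcons.1 t).1 j
  have hσ1 : ∀ t (j : Fin K), barSum (σ t) j ≤ 1 :=
    fun t j => barSum_le_one (hcons.1 t) j
  have hf0 : ∀ t, 0 ≤ f t := fun t => (hfpos t).le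
  -- part 1: f s * barSum (σ s) i * v i ≤ v k * barSum x k
  have h1 : f s * (v i * barSum (σ s) i) ≤ v k * barSum x k := by
    have ha : f s * (v i * barSum (σ s) i) ≤ f s * (v k * barSum (σ s) k) :=
      mul_le_mul_of_nonneg_left (hopt i) (hf0 s)
    have hb : f s * barSum (σ s) k ≤ barSum x k := by
      rw [barSum_agg hcons k]
      exact Finset.single_le_sum (f := fun t => f t * barSum (σ t) k)
        (fun t _ => mul_nonneg (hf0 t) (hσ0 t k)) (Finset.mem_univ s)
    have hvk : 0 ≤ v k := (hpos k).le
    calc f s * (v i * barSum (σ s) i) ≤ f s * (v k * barSum (σ s) k) := ha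
      _ = v k * (f s * barSum (σ s) k) := by ring
      _ ≤ v k * barSum x k := mul_le_mul_of_nonneg_left hb hvk
  -- part 2: barSum x i ≤ f s * barSum (σ s) i + (1 - f s)
  have h2 : barSum x i ≤ f s * barSum (σ s) i + (1 - f s) := by
    rw [barSum_agg hcons i, ← Finset.add_sum_erase _ _ (Finset.mem_univ s)]
    have : ∑ t ∈ Finset.univ.erase s, f t * barSum (σ t) i ≤
        ∑ t ∈ Finset.univ.erase s, f t :=
      Finset.sum_le_sum fun t _ => by
        nlinarith [hσ1 t i, hσ0 t i, hfpos t]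
    have hsum : ∑ t ∈ Finset.univ.erase s, f t = 1 - f s := by
      rw [← hfsum, ← Finset.add_sum_erase _ _ (Finset.mem_univ s)]; ring
    linarith
  -- combine
  have h1' : f s * barSum (σ s) i ≤ v k * barSum x k / v i := by
    rw [le_div_iff₀ hvi]
    nlinarith [h1]
  nlinarith [hσ1 s i, hσ0 s i]
end

section
/- Define λ̲ = min over v_j ≤ v_{i*} of [ (max over v_i > v_{i*} of v_i x̄*_i)/v_j + 1 − x̄*_j ]. If f is a database (finitely supported distribution over labels with all f_s > 0) such that f_s > λ̲ for every label s, then for every segmentation σ consistent with x* and f, the monopolist's optimal price in every segment s (the largest revenue-maximizing price for σ(·|s)) is at most the uniform monopoly price v_{i*}. -/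
open Finset

/-- if f s > λ̲ for every label, then in every consistent segmentation the
monopolist's charged (largest optimal) price in each segment is at most the uniform
monopoly price. -/
theorem prices_le_uniform {K n : ℕ} (v : Fin K → ℝ) (hmono : StrictMono v)
    (hpos : ∀ i, 0 < v i) (x : Fin K → ℝ) (hx : IsMarket x)
    (istar : Fin K) (histar : LargestOptimal v x istar)
    (hIoi : (Finset.Ioi istar).Nonempty)
    (f : Fin n → ℝ) (hfpos : ∀ s, 0 < f s) (hfsum : ∑ s, f s = 1)
    (hlow : ∀ s, lamLow v x istar hIoi < f s)
    (σ : Fin n → Fin K → ℝ) (hcons : Consistent x f σ) :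
    ∀ s k, LargestOptimal v (σ s) k → k ≤ istar := by
  intro s k hk
  by_contra hgt
  push_neg at hgt
  obtain ⟨hmk, hag⟩ := hcons
  have hbar : ∀ j, barSum x j = ∑ t, f t * barSum (σ t) j := by
    intro j
    unfold barSum
    calc ∑ i ∈ Finset.Ici j, x i
        = ∑ i ∈ Finset.Ici j, ∑ t, f t * σ t i :=
          Finset.sum_congr rfl fun i _ => (hag i).symm
      _ = ∑ t, ∑ i ∈ Finset.Ici j, f t * σ t i := Finset.sum_comm
      _ = ∑ t, f t * ∑ i ∈ Finset.Ici j, σ t i :=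
          Finset.sum_congr rfl fun t _ => (Finset.mul_sum _ _ _).symm
  have hb0 : ∀ t j, 0 ≤ barSum (σ t) j := fun t j =>
    Finset.sum_nonneg fun i _ => (hmk t).1 i
  have hb1 : ∀ t j, barSum (σ t) j ≤ 1 := by
    intro t j
    rw [← (hmk t).2]
    exact Finset.sum_le_sum_of_subset_of_nonneg (Finset.subset_univ _)
      (fun i _ _ => (hmk t).1 i)
  set M := (Finset.Ioi istar).sup' hIoi (fun i => v i * barSum x i) with hM
  have key : ∀ j ∈ Finset.Iic istar, f s ≤ M / v j + 1 - barSum x j := by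
    intro j _
    have hvj : 0 < v j := hpos j
    have hvk : 0 < v k := hpos k
    have h1 : v j * barSum (σ s) j ≤ v k * barSum (σ s) k := hk.1 j
    have h2 : f s * barSum (σ s) k ≤ barSum x k := by
      rw [hbar]
      exact Finset.single_le_sum (f := fun t => f t * barSum (σ t) k)
        (fun t _ => mul_nonneg (hfpos t).le (hb0 t k)) (Finset.mem_univ s)
    have h3 : v k * barSum x k ≤ M :=
      Finset.le_sup' (fun i => v i * barSum x i) (Finset.mem_Ioi.mpr hgt)
    have h4 : barSum x j ≤ f s * barSum (σ s) j + (1 - f s) := by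
      rw [hbar]
      have e1 : ∑ t, f t * barSum (σ t) j
          = f s * barSum (σ s) j + ∑ t ∈ Finset.univ.erase s, f t * barSum (σ t) j :=
        (Finset.add_sum_erase _ _ (Finset.mem_univ s)).symm
      have e2 : ∑ t ∈ Finset.univ.erase s, f t * barSum (σ t) j
          ≤ ∑ t ∈ Finset.univ.erase s, f t :=
        Finset.sum_le_sum fun t _ => mul_le_of_le_one_right (hfpos t).le (hb1 t j)
      have e3 : ∑ t ∈ Finset.univ.erase s, f t = 1 - f s := by
        rw [Finset.sum_erase_eq_sub (Finset.mem_univ s), hfsum]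
      linarith
    have h5 : f s * (v k * barSum (σ s) k) ≤ M := by
      have := mul_le_mul_of_nonneg_left h2 hvk.le
      -- v k * (f s * bar) ≤ v k * barSum x k
      have e : v k * (f s * barSum (σ s) k) = f s * (v k * barSum (σ s) k) := by ring
      linarith
    have h6 : f s * (v j * barSum (σ s) j) ≤ M := by
      have := mul_le_mul_of_nonneg_left h1 (hfpos s).le
      linarith
    have h7 : v j * (barSum x j - 1 + f s) ≤ M := by
      have e := mul_le_mul_of_nonneg_left
        (show barSum x j - 1 + f s ≤ f s * barSum (σ s) j from by linarith) hvj.le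
      have e' : v j * (f s * barSum (σ s) j) = f s * (v j * barSum (σ s) j) := by ring
      linarith
    have h8 : f s - 1 + barSum x j ≤ M / v j := by
      rw [le_div_iff₀ hvj]
      nlinarith [h7]
    linarith
  have hle : f s ≤ lamLow v x istar hIoi := by
    unfold lamLow
    rw [← hM]
    exact Finset.le_inf' _ _ key
  exact absurd hle (not_le.mpr (hlow s))
end

section
/- Define λ̲ = min_{v_j ≤ v_{i*}} [ (max_{v_i > v_{i*}} v_i x̄*_i)/v_j + 1 − x̄*_j ]. If f_s > λ̲ for every label s, then for every segmentation σ consistent with x* and f, the resulting consumer surplus u(σ,f) = sum_s f_s sum_{j ≥ i*_s} (v_j − v_{i*_s}) σ(j|s) is at least u* = sum_{j ≥ i*} (v_j − v_{i*}) x*_j, the consumer surplus under the uniform monopoly price. -/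
open Finset

lemma sum_Iio_add_Ici {K : ℕ} (y : Fin K → ℝ) (j : Fin K) :
    ∑ k ∈ Finset.Iio j, y k + ∑ k ∈ Finset.Ici j, y k = ∑ k, y k := by
  rw [← Finset.sum_union (by simp [Finset.disjoint_left, Finset.mem_Iio, Finset.mem_Ici])]
  congr 1
  ext k
  simp [Finset.mem_Iio, Finset.mem_Ici, lt_or_ge]

/-- if f s > λ̲ for every label, then every consistent segmentation yields
consumer surplus at least u*. -/
theorem cs_ge_uniform {K n : ℕ} (v : Fin K → ℝ) (hmono : StrictMono v)
    (hpos : ∀ i, 0 < v i) (x : Fin K → ℝ) (hx : IsMarket x)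
    (istar : Fin K) (histar : LargestOptimal v x istar)
    (hIoi : (Finset.Ioi istar).Nonempty)
    (f : Fin n → ℝ) (hfpos : ∀ s, 0 < f s) (hfsum : ∑ s, f s = 1)
    (hlow : ∀ s, lamLow v x istar hIoi < f s)
    (σ : Fin n → Fin K → ℝ) (hcons : Consistent x f σ)
    (p : Fin n → Fin K) (hp : ∀ s, LargestOptimal v (σ s) (p s)) :
    (∑ j ∈ Finset.Ici istar, (v j - v istar) * x j) ≤ CS v f σ p := by
  obtain ⟨hmkt, hagg⟩ := hcons
  have hle : ∀ s k, f s * σ s k ≤ x k := by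
    intro s k
    rw [← hagg k]
    exact Finset.single_le_sum (f := fun t => f t * σ t k)
      (fun t _ => mul_nonneg (hfpos t).le ((hmkt t).1 k)) (Finset.mem_univ s)
  -- Step 1: every segment price is at most istar
  have hps : ∀ s, p s ≤ istar := by
    intro s
    by_contra h
    push_neg at h
    set M := (Finset.Ioi istar).sup' hIoi fun i => v i * barSum x i with hM
    have hfs := hfpos s
    have h1 : f s * barSum (σ s) (p s) ≤ barSum x (p s) := by
      unfold barSum
      rw [Finset.mul_sum]
      exact Finset.sum_le_sum fun j _ => hle s j
    have h2 : v (p s) * barSum x (p s) ≤ M :=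
      Finset.le_sup' (fun i => v i * barSum x i) (Finset.mem_Ioi.mpr h)
    have key : ∀ j ∈ Finset.Iic istar, f s ≤ M / v j + 1 - barSum x j := by
      intro j _
      have hvj := hpos j
      have hb : f s * (1 - barSum (σ s) j) ≤ 1 - barSum x j := by
        have e1 : 1 - barSum (σ s) j = ∑ k ∈ Finset.Iio j, σ s k := by
          have := sum_Iio_add_Ici (σ s) j
          rw [(hmkt s).2] at this
          unfold barSum; linarith
        have e2 : 1 - barSum x j = ∑ k ∈ Finset.Iio j, x k := by
          have := sum_Iio_add_Ici x j
          rw [hx.2] at this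
          unfold barSum; linarith
        rw [e1, e2, Finset.mul_sum]
        exact Finset.sum_le_sum fun k _ => hle s k
      have hopt : v j * barSum (σ s) j ≤ v (p s) * barSum (σ s) (p s) := (hp s).1 j
      have hvp := hpos (p s)
      -- chain multiplied by f s
      have c1 : f s * (v j * barSum (σ s) j) ≤ f s * (v (p s) * barSum (σ s) (p s)) :=
        mul_le_mul_of_nonneg_left hopt hfs.le
      have c2 : f s * (v (p s) * barSum (σ s) (p s)) ≤ M := by
        calc f s * (v (p s) * barSum (σ s) (p s))
            = v (p s) * (f s * barSum (σ s) (p s)) := by ring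
          _ ≤ v (p s) * barSum x (p s) := mul_le_mul_of_nonneg_left h1 hvp.le
          _ ≤ M := h2
      have c3 : v j * (f s - (1 - barSum x j)) ≤ f s * (v j * barSum (σ s) j) := by
        have : v j * (f s * (1 - barSum (σ s) j)) ≤ v j * (1 - barSum x j) :=
          mul_le_mul_of_nonneg_left hb hvj.le
        nlinarith
      have : v j * (f s - (1 - barSum x j)) ≤ M := le_trans c3 (le_trans c1 c2)
      have : f s - (1 - barSum x j) ≤ M / v j := by
        rw [le_div_iff₀ hvj]; linarith [this]
      linarith
    have : f s ≤ lamLow v x istar hIoi :=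
      Finset.le_inf' _ _ key
    linarith [hlow s]
  -- Step 2: pointwise bound on each segment's surplus
  have hseg : ∀ s, ∑ j ∈ Finset.Ici istar, (v j - v istar) * σ s j
      ≤ ∑ j ∈ Finset.Ici (p s), (v j - v (p s)) * σ s j := by
    intro s
    calc ∑ j ∈ Finset.Ici istar, (v j - v istar) * σ s j
        ≤ ∑ j ∈ Finset.Ici istar, (v j - v (p s)) * σ s j := by
          apply Finset.sum_le_sum
          intro j _
          apply mul_le_mul_of_nonneg_right _ ((hmkt s).1 j)
          have : v (p s) ≤ v istar := hmono.monotone (hps s)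
          linarith
      _ ≤ ∑ j ∈ Finset.Ici (p s), (v j - v (p s)) * σ s j := by
          apply Finset.sum_le_sum_of_subset_of_nonneg
          · exact Finset.Ici_subset_Ici.mpr (hps s)
          · intro j hj _
            have : v (p s) ≤ v j := hmono.monotone (Finset.mem_Ici.mp hj)
            exact mul_nonneg (by linarith) ((hmkt s).1 j)
  -- Step 3: aggregate
  calc ∑ j ∈ Finset.Ici istar, (v j - v istar) * x j
      = ∑ s, f s * ∑ j ∈ Finset.Ici istar, (v j - v istar) * σ s j := by
        simp_rw [Finset.mul_sum]
        rw [Finset.sum_comm]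
        apply Finset.sum_congr rfl
        intro j _
        rw [← hagg j, Finset.mul_sum]
        apply Finset.sum_congr rfl
        intro s _
        ring
    _ ≤ CS v f σ p := by
        apply Finset.sum_le_sum
        intro s _
        exact mul_le_mul_of_nonneg_left (hseg s) (hfpos s).le
end

section
/- Let x* be a market with uniform monopoly price v_{i*}, and let σ be a segmentation with weights f consistent with x*. Suppose in segment s the monopolist's (tie-breaking-against-consumers) price is some v_k < v_{i*}, i.e., v_k sum_{j≥k} σ(j|s) > v_{i*} sum_{j≥i*} σ(j|s). Then f_s < 1 − (v_{i*} x̄*_{i*} − v_k x̄*_k)/(v_{i*} − v_k). -/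
open Finset

/-- if in segment s a price strictly below the uniform monopoly price yields
strictly higher profit than the uniform monopoly price, then f s is bounded above. -/
theorem weight_bound_of_low_price {K n : ℕ} (v : Fin K → ℝ) (hmono : StrictMono v)
    (hpos : ∀ i, 0 < v i) (x : Fin K → ℝ) (hx : IsMarket x)
    (istar : Fin K) (histar : LargestOptimal v x istar)
    (f : Fin n → ℝ) (σ : Fin n → Fin K → ℝ)
    (hfpos : ∀ s, 0 < f s) (hfsum : ∑ s, f s = 1)
    (hcons : Consistent x f σ)
    (s : Fin n) (k : Fin K) (hk : k < istar)
    (hstrict : v istar * barSum (σ s) istar < v k * barSum (σ s) k) :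
    f s < 1 - (v istar * barSum x istar - v k * barSum x k) / (v istar - v k) := by
  obtain ⟨hσ, hagg⟩ := hcons
  have hvd : 0 < v istar - v k := sub_pos.mpr (hmono hk)
  have hbar : ∀ j : Fin K, barSum x j = ∑ t, f t * barSum (σ t) j := by
    intro j
    unfold barSum
    simp_rw [← hagg, Finset.mul_sum]
    rw [Finset.sum_comm]
  set r : Fin K → ℝ := fun j => ∑ t ∈ Finset.univ.erase s, f t * barSum (σ t) j with hr
  have hsplit : ∀ j : Fin K, barSum x j = f s * barSum (σ s) j + r j := by
    intro j
    rw [hbar j, hr]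
    exact (Finset.add_sum_erase _ _ (Finset.mem_univ s)).symm
  have hbnonneg : ∀ t j, 0 ≤ barSum (σ t) j := fun t j =>
    Finset.sum_nonneg fun i _ => (hσ t).1 i
  have hble : ∀ t j, barSum (σ t) j ≤ 1 := by
    intro t j
    rw [← (hσ t).2]
    exact Finset.sum_le_sum_of_subset_of_nonneg (Finset.subset_univ _)
      (fun i _ _ => (hσ t).1 i)
  have hmonob : ∀ t, barSum (σ t) istar ≤ barSum (σ t) k := by
    intro t
    exact Finset.sum_le_sum_of_subset_of_nonneg
      (Finset.Ici_subset_Ici.mpr hk.le) (fun i _ _ => (hσ t).1 i)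
  have hr1 : r istar ≤ r k :=
    Finset.sum_le_sum fun t _ => mul_le_mul_of_nonneg_left (hmonob t) (hfpos t).le
  have hr2 : r k ≤ 1 - f s := by
    have : r k ≤ ∑ t ∈ Finset.univ.erase s, f t := by
      apply Finset.sum_le_sum
      intro t _
      nlinarith [hble t k, hbnonneg t k, hfpos t]
    have h2 : ∑ t ∈ Finset.univ.erase s, f t = 1 - f s := by
      have := Finset.add_sum_erase Finset.univ f (Finset.mem_univ s)
      rw [hfsum] at this
      linarith
    linarith
  have hrk0 : 0 ≤ r k := Finset.sum_nonneg fun t _ =>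
    mul_nonneg (hfpos t).le (hbnonneg t k)
  have key : v istar * barSum x istar - v k * barSum x k < (v istar - v k) * (1 - f s) := by
    rw [hsplit istar, hsplit k]
    have h1 : f s * (v istar * barSum (σ s) istar) < f s * (v k * barSum (σ s) k) :=
      mul_lt_mul_of_pos_left hstrict (hfpos s)
    have h2 : v istar * r istar ≤ v istar * r k :=
      mul_le_mul_of_nonneg_left hr1 (hpos istar).le
    nlinarith

  have := (div_lt_iff₀ hvd).mpr (by linarith [key] : v istar * barSum x istar - v k * barSum x k < (1 - f s) * (v istar - v k))
  nlinarith [this]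
end

section
/- Define λ̄ = max over v_j < v_{i*} of [ 1 − (v_{i*} x̄*_{i*} − v_j x̄*_j)/(v_{i*} − v_j) ]. Suppose f is a database achieving worst-case optimality (f_s > λ̲ for all s), and suppose there exists a segmentation σ consistent with x* and f whose consumer surplus strictly exceeds u*. Then there exists a label s with f_s < λ̄. -/
open Finset

/-- a worst-case optimal database whose consumer surplus strictly exceeds u*
for some consistent segmentation must have some label of weight below λ̄. -/
theorem exists_label_below_lamHigh {K n : ℕ} (v : Fin K → ℝ) (hmono : StrictMono v)
    (hpos : ∀ i, 0 < v i) (x : Fin K → ℝ) (hx : IsMarket x)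
    (istar : Fin K) (histar : LargestOptimal v x istar)
    (hIoi : (Finset.Ioi istar).Nonempty) (hIio : (Finset.Iio istar).Nonempty)
    (f : Fin n → ℝ) (hfpos : ∀ s, 0 < f s) (hfsum : ∑ s, f s = 1)
    (hlow : ∀ s, lamLow v x istar hIoi < f s)
    (σ : Fin n → Fin K → ℝ) (hcons : Consistent x f σ)
    (p : Fin n → Fin K) (hp : ∀ s, LargestOptimal v (σ s) (p s))
    (hCS : (∑ j ∈ Finset.Ici istar, (v j - v istar) * x j) < CS v f σ p) :
    ∃ s, f s < lamHigh v x istar hIio := by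
  obtain ⟨hσmkt, hσagg⟩ := hcons
  -- Step 1: some segment has price strictly below istar
  have hexists : ∃ s, p s < istar := by
    by_contra h
    push_neg at h
    have hle : CS v f σ p ≤ ∑ j ∈ Finset.Ici istar, (v j - v istar) * x j := by
      calc CS v f σ p ≤ ∑ s, f s * ∑ j ∈ Finset.Ici istar, (v j - v istar) * σ s j := by
            apply Finset.sum_le_sum
            intro s _
            apply mul_le_mul_of_nonneg_left _ (hfpos s).le
            calc ∑ j ∈ Finset.Ici (p s), (v j - v (p s)) * σ s j
                ≤ ∑ j ∈ Finset.Ici (p s), (v j - v istar) * σ s j := by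
                  apply Finset.sum_le_sum
                  intro j _
                  exact mul_le_mul_of_nonneg_right
                    (by have := hmono.monotone (h s); linarith) ((hσmkt s).1 j)
              _ ≤ ∑ j ∈ Finset.Ici istar, (v j - v istar) * σ s j := by
                  apply Finset.sum_le_sum_of_subset_of_nonneg
                  · exact Finset.Ici_subset_Ici.mpr (h s)
                  · intro j hj _
                    have hij : istar ≤ j := Finset.mem_Ici.mp hj
                    exact mul_nonneg (by have := hmono.monotone hij; linarith)
                      ((hσmkt s).1 j)
        _ = ∑ j ∈ Finset.Ici istar, (v j - v istar) * x j := by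
            simp_rw [Finset.mul_sum]
            rw [Finset.sum_comm]
            refine Finset.sum_congr rfl fun j _ => ?_
            rw [← hσagg j, Finset.mul_sum]
            exact Finset.sum_congr rfl fun t _ => by ring
    exact absurd hCS (not_lt.mpr hle)
  obtain ⟨s, hs⟩ := hexists
  have hk : p s ∈ Finset.Iio istar := Finset.mem_Iio.mpr hs
  refine ⟨s, lt_of_lt_of_le ?_ (Finset.le_sup'
    (fun j => 1 - (v istar * barSum x istar - v j * barSum x j) / (v istar - v j)) hk)⟩
  have hd : (0:ℝ) < v istar - v (p s) := sub_pos.mpr (hmono hs)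
  have hbnn : ∀ t j, 0 ≤ barSum (σ t) j := fun t j =>
    Finset.sum_nonneg fun i _ => (hσmkt t).1 i
  have hb1 : ∀ t j, barSum (σ t) j ≤ 1 := by
    intro t j
    rw [← (hσmkt t).2]
    exact Finset.sum_le_sum_of_subset_of_nonneg (Finset.subset_univ _)
      fun i _ _ => (hσmkt t).1 i
  have hbanti : ∀ t, barSum (σ t) istar ≤ barSum (σ t) (p s) := fun t =>
    Finset.sum_le_sum_of_subset_of_nonneg (Finset.Ici_subset_Ici.mpr hs.le)
      fun i _ _ => (hσmkt t).1 i
  have hstrict : v istar * barSum (σ s) istar < v (p s) * barSum (σ s) (p s) := by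
    rcases ((hp s).1 istar).lt_or_eq with h | h
    · exact h
    · exfalso
      have hopt : OptimalPrice v (σ s) istar := by
        intro i
        rw [h]
        exact (hp s).1 i
      exact absurd ((hp s).2 istar hopt) (not_le.mpr hs)
  have hagg : ∀ j, barSum x j = ∑ t, f t * barSum (σ t) j := by
    intro j
    unfold barSum
    calc ∑ i ∈ Finset.Ici j, x i
        = ∑ i ∈ Finset.Ici j, ∑ t, f t * σ t i :=
          Finset.sum_congr rfl fun i _ => (hσagg i).symm
      _ = ∑ t, ∑ i ∈ Finset.Ici j, f t * σ t i := Finset.sum_comm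
      _ = ∑ t, f t * ∑ i ∈ Finset.Ici j, σ t i := by
          exact Finset.sum_congr rfl fun t _ => (Finset.mul_sum _ _ _).symm
  have hfs' : ∑ t ∈ Finset.univ.erase s, f t = 1 - f s := by
    have := Finset.add_sum_erase Finset.univ f (Finset.mem_univ s)
    rw [hfsum] at this
    linarith
  have hrw : v istar * barSum x istar - v (p s) * barSum x (p s)
      = ∑ t, f t * (v istar * barSum (σ t) istar - v (p s) * barSum (σ t) (p s)) := by
    rw [hagg istar, hagg (p s), Finset.mul_sum, Finset.mul_sum, ← Finset.sum_sub_distrib]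
    exact Finset.sum_congr rfl fun t _ => by ring
  have key : v istar * barSum x istar - v (p s) * barSum x (p s)
      < (1 - f s) * (v istar - v (p s)) := by
    rw [hrw, ← Finset.add_sum_erase Finset.univ _ (Finset.mem_univ s), ← hfs',
      Finset.sum_mul]
    have h1 : f s * (v istar * barSum (σ s) istar - v (p s) * barSum (σ s) (p s)) < 0 :=
      mul_neg_of_pos_of_neg (hfpos s) (by linarith)
    have h2 : ∑ t ∈ Finset.univ.erase s,
        f t * (v istar * barSum (σ t) istar - v (p s) * barSum (σ t) (p s))
        ≤ ∑ t ∈ Finset.univ.erase s, f t * (v istar - v (p s)) := by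
      apply Finset.sum_le_sum
      intro t _
      apply mul_le_mul_of_nonneg_left _ (hfpos t).le
      nlinarith [hbanti t, hb1 t istar, hbnn t istar, hbnn t (p s), hpos (p s),
        mul_nonneg (hpos (p s)).le (sub_nonneg.mpr (hbanti t)),
        mul_nonneg hd.le (sub_nonneg.mpr (hb1 t istar))]
    linarith
  have hdiv : (v istar * barSum x istar - v (p s) * barSum x (p s)) / (v istar - v (p s))
      < 1 - f s := (div_lt_iff₀ hd).mpr (by linarith)
  linarith
end

section
/- Let x* have uniform monopoly price v_{i*} < v_K and let v_ī = max{argmax_{v_j > v_{i*}} v_j x̄*_j}. Then for every v_j > v_{i*}, (v_ī x̄*_ī)/v_j + 1 − x̄*_j > (v_ī x̄*_ī)/v_{i*} + 1 − x̄*_{i*}. Consequently, the minimum of (v_ī x̄*_ī)/v_j + 1 − x̄*_j over all v_j in the support of x* is attained at some v_j ≤ v_{i*}. -/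
open Finset

/-- for every v_j > v_{i*} the objective exceeds its value at i*, hence
the minimum over the support of x* is attained at some index ≤ i*. -/
theorem argmin_below_istar {K : ℕ} (v : Fin K → ℝ) (hmono : StrictMono v)
    (hpos : ∀ i, 0 < v i) (x : Fin K → ℝ) (hx : IsMarket x)
    (istar : Fin K) (histar : LargestOptimal v x istar)
    (hIoi : (Finset.Ioi istar).Nonempty)
    (ibar : Fin K) (hibar1 : istar < ibar)
    (hibar2 : ∀ j, istar < j → v j * barSum x j ≤ v ibar * barSum x ibar)
    (hibar3 : ∀ j, istar < j → v j * barSum x j = v ibar * barSum x ibar → j ≤ ibar) :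
    (∀ j, istar < j →
      v ibar * barSum x ibar / v istar + 1 - barSum x istar <
        v ibar * barSum x ibar / v j + 1 - barSum x j) ∧
    (∃ j, x j ≠ 0 ∧ j ≤ istar ∧ ∀ k, x k ≠ 0 →
      v ibar * barSum x ibar / v j + 1 - barSum x j ≤
        v ibar * barSum x ibar / v k + 1 - barSum x k) := by
  obtain ⟨hx0, hx1⟩ := hx
  have hbs : ∀ k, 0 ≤ barSum x k := fun k => Finset.sum_nonneg fun i _ => hx0 i
  have hA1 : v ibar * barSum x ibar < v istar * barSum x istar := by
    rcases lt_or_eq_of_le (histar.1 ibar) with h | h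
    · exact h
    · exfalso
      have hopt : OptimalPrice v x ibar := fun i => h ▸ histar.1 i
      exact absurd (histar.2 ibar hopt) (not_le.mpr hibar1)
  have part1 : ∀ j, istar < j →
      v ibar * barSum x ibar / v istar + 1 - barSum x istar <
        v ibar * barSum x ibar / v j + 1 - barSum x j := by
    intro j hj
    have h2 : v j * barSum x j ≤ v ibar * barSum x ibar := hibar2 j hj
    have h3 : v ibar * barSum x ibar / v istar < barSum x istar :=
      (div_lt_iff₀ (hpos istar)).mpr (by nlinarith)
    have h4 : barSum x j ≤ v ibar * barSum x ibar / v j :=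
      (le_div_iff₀ (hpos j)).mpr (by nlinarith)
    linarith
  refine ⟨part1, ?_⟩
  set g : Fin K → ℝ := fun k => v ibar * barSum x ibar / v k + 1 - barSum x k with hg
  have hsupp : ∃ i, x i ≠ 0 := by
    by_contra h
    push_neg at h
    rw [Finset.sum_eq_zero (fun i _ => h i)] at hx1
    exact one_ne_zero hx1.symm
  by_cases hist : x istar = 0
  · -- all mass is at or below istar
    have hall : ∀ l, istar < l → x l = 0 := by
      intro l hl
      by_contra hxl
      set S' := (Finset.Ioi istar).filter (fun k => x k ≠ 0) with hS'
      have hne : S'.Nonempty := ⟨l, by simp [hS', Finset.mem_filter, hl, hxl]⟩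
      set k₀ := S'.min' hne with hk₀def
      have hk₀mem : k₀ ∈ S' := S'.min'_mem hne
      have hk₀gt : istar < k₀ := by
        have := (Finset.mem_filter.mp hk₀mem).1
        exact Finset.mem_Ioi.mp this
      have hk₀ne : x k₀ ≠ 0 := (Finset.mem_filter.mp hk₀mem).2
      have hsub : Finset.Ici k₀ ⊆ Finset.Ioi istar := by
        intro i hi
        exact Finset.mem_Ioi.mpr (lt_of_lt_of_le hk₀gt (Finset.mem_Ici.mp hi))
      have claim1 : barSum x k₀ = ∑ i ∈ Finset.Ioi istar, x i := by
        unfold barSum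
        refine Finset.sum_subset hsub ?_
        intro i hi hni
        by_contra hxi
        have hiS : i ∈ S' := Finset.mem_filter.mpr ⟨hi, hxi⟩
        exact hni (Finset.mem_Ici.mpr (S'.min'_le i hiS))
      have claim2 : barSum x istar = ∑ i ∈ Finset.Ioi istar, x i := by
        unfold barSum
        refine (Finset.sum_subset (fun i hi => Finset.mem_Ici.mpr
          (le_of_lt (Finset.mem_Ioi.mp hi))) ?_).symm
        intro i hi hni
        have : i = istar := le_antisymm (not_lt.mp (fun h => hni (Finset.mem_Ioi.mpr h)))
          (Finset.mem_Ici.mp hi)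
        rw [this]; exact hist
      have hm : 0 < ∑ i ∈ Finset.Ioi istar, x i := by
        rw [← claim1]
        unfold barSum
        calc (0:ℝ) < x k₀ := lt_of_le_of_ne (hx0 k₀) (Ne.symm hk₀ne)
          _ ≤ ∑ j ∈ Finset.Ici k₀, x j :=
            Finset.single_le_sum (fun i _ => hx0 i) (Finset.mem_Ici.mpr le_rfl)
      have hoptk := histar.1 k₀
      rw [claim1, claim2] at hoptk
      have hvlt : v istar < v k₀ := hmono hk₀gt
      nlinarith
    obtain ⟨j₀, hj₀⟩ := hsupp
    have hTne : (Finset.univ.filter (fun k => x k ≠ 0)).Nonempty :=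
      ⟨j₀, Finset.mem_filter.mpr ⟨Finset.mem_univ _, hj₀⟩⟩
    obtain ⟨j, hjmem, hjmin⟩ := Finset.exists_min_image _ g hTne
    have hjne : x j ≠ 0 := (Finset.mem_filter.mp hjmem).2
    have hjle : j ≤ istar := by
      by_contra h
      exact hjne (hall j (not_le.mp h))
    refine ⟨j, hjne, hjle, ?_⟩
    intro k hk
    exact hjmin k (Finset.mem_filter.mpr ⟨Finset.mem_univ _, hk⟩)
  · -- istar is in the support
    set T := Finset.univ.filter (fun k => x k ≠ 0 ∧ k ≤ istar) with hT
    have hTne : T.Nonempty := ⟨istar, Finset.mem_filter.mpr ⟨Finset.mem_univ _, hist, le_rfl⟩⟩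
    obtain ⟨j, hjmem, hjmin⟩ := Finset.exists_min_image T g hTne
    obtain ⟨-, hjne, hjle⟩ := Finset.mem_filter.mp hjmem
    refine ⟨j, hjne, hjle, ?_⟩
    intro k hk
    by_cases hkle : k ≤ istar
    · exact hjmin k (Finset.mem_filter.mpr ⟨Finset.mem_univ _, hk, hkle⟩)
    · have h1 : g j ≤ g istar :=
        hjmin istar (Finset.mem_filter.mpr ⟨Finset.mem_univ _, hist, le_rfl⟩)
      have h2 : g istar < g k := part1 k (not_le.mp hkle)
      exact le_of_lt (lt_of_le_of_lt h1 h2)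
end

section
/- In the greedy segmentation algorithm applied to x* (which at each step splits the residual market x^{l−1} as α^l x^{S_{l−1}} + (1 − α^l) x^l with S_{l−1} = supp x^{l−1}), if at step l the residual satisfies x^l_i > 0 for some valuation v_i > v_ī, then x^l_ī > 0, where v_ī = max{argmax_{v_j > v_{i*}} v_j x̄*_j}. -/
open Finset

/-- The support of x as a finset. -/
noncomputable def suppF {K : ℕ} (x : Fin K → ℝ) : Finset (Fin K) :=
  Finset.univ.filter fun i => x i ≠ 0

/-- One step of the greedy algorithm: the next residual market. -/
noncomputable def greedyStep {K : ℕ} (v x : Fin K → ℝ) : Fin K → ℝ :=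
  if h : (suppF x).Nonempty then
    if x = extreme v (suppF x) h then 0
    else
      fun i => extreme v (suppF x) h i +
        (sInf {t : ℝ | 0 ≤ t ∧ ∃ j, extreme v (suppF x) h j
            + t * (x j - extreme v (suppF x) h j) < 0})
          * (x i - extreme v (suppF x) h i)
  else 0

/-- The residual market x^l after l steps of the greedy algorithm started at x. -/
noncomputable def resid {K : ℕ} (v x : Fin K → ℝ) : ℕ → Fin K → ℝ
  | 0 => x
  | l + 1 => greedyStep v (resid v x l)

/-- The share α of the current residual assigned to the extreme market on its support. -/
noncomputable def alphaStep {K : ℕ} (v x : Fin K → ℝ) : ℝ :=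
  if h : (suppF x).Nonempty then
    if x = extreme v (suppF x) h then 1
    else 1 - 1 / sInf {t : ℝ | 0 ≤ t ∧ ∃ j, extreme v (suppF x) h j
        + t * (x j - extreme v (suppF x) h j) < 0}
  else 1

/-- The mass y(x^{S_l}) assigned by the greedy algorithm to the l-th extreme market. -/
noncomputable def greedyMass {K : ℕ} (v x : Fin K → ℝ) (l : ℕ) : ℝ :=
  alphaStep v (resid v x l) * ∏ j ∈ Finset.range l, (1 - alphaStep v (resid v x j))


lemma mem_suppF {K : ℕ} {x : Fin K → ℝ} {k : Fin K} : k ∈ suppF x ↔ x k ≠ 0 := by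
  simp [suppF]

lemma nextIn_gt {K : ℕ} {S : Finset (Fin K)} {i : Fin K}
    (h : (S.filter (fun j => i < j)).Nonempty) : i < nextIn S i := by
  rw [nextIn, dif_pos h]
  exact (Finset.mem_filter.mp ((S.filter (fun j => i < j)).min'_mem h)).2

lemma tele {K : ℕ} (g : Fin K → ℝ) :
    ∀ (T : Finset (Fin K)) (hT : T.Nonempty),
      ∑ j ∈ T.erase (T.max' hT), (g j - g (nextIn T j)) = g (T.min' hT) - g (T.max' hT) := by
  intro T
  induction T using Finset.strongInduction with
  | _ T ih =>
    intro hT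
    by_cases hd : T.min' hT = T.max' hT
    · have he : T.erase (T.max' hT) = ∅ := by
        rw [Finset.eq_empty_iff_forall_notMem]
        intro m hm
        rcases Finset.mem_erase.mp hm with ⟨hne, hmT⟩
        exact hne (le_antisymm (Finset.le_max' T m hmT) (hd ▸ Finset.min'_le T m hmT))
      rw [he, Finset.sum_empty, hd]; ring
    · set a := T.min' hT with ha
      have hamem : a ∈ T := T.min'_mem hT
      set T' := T.erase a with hT'def
      have hmaxT : T.max' hT ∈ T' := Finset.mem_erase.mpr ⟨fun h => hd h.symm, T.max'_mem hT⟩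
      have hT' : T'.Nonempty := ⟨_, hmaxT⟩
      have hsub : T' ⊂ T := Finset.erase_ssubset hamem
      have hmax : T'.max' hT' = T.max' hT := by
        apply le_antisymm
        · exact Finset.max'_le _ _ _ (fun y hy => Finset.le_max' T y (Finset.mem_of_mem_erase hy))
        · exact Finset.le_max' T' _ hmaxT
      have hfil : T.filter (fun j => a < j) = T' := by
        ext m
        simp only [Finset.mem_filter, hT'def, Finset.mem_erase]
        constructor
        · rintro ⟨h1, h2⟩; exact ⟨ne_of_gt h2, h1⟩
        · rintro ⟨h1, h2⟩; exact ⟨h2, lt_of_le_of_ne (Finset.min'_le T m h2) (Ne.symm h1)⟩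
      have hfilne : (T.filter (fun j => a < j)).Nonempty := by rw [hfil]; exact hT'
      have hmin' : nextIn T a = T'.min' hT' := by
        simp only [nextIn, dif_pos hfilne]
        congr 1
      have hnext : ∀ j ∈ T'.erase (T'.max' hT'), nextIn T j = nextIn T' j := by
        intro j hj
        have hjT' : j ∈ T' := Finset.mem_of_mem_erase hj
        have hja : a < j := lt_of_le_of_ne (Finset.min'_le T j (Finset.mem_of_mem_erase hjT'))
          (Ne.symm (Finset.mem_erase.mp hjT').1)
        have heq2 : T.filter (fun m => j < m) = T'.filter (fun m => j < m) := by
          ext m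
          simp only [Finset.mem_filter, hT'def, Finset.mem_erase]
          constructor
          · rintro ⟨h1, h2⟩; exact ⟨⟨ne_of_gt (hja.trans h2), h1⟩, h2⟩
          · rintro ⟨⟨_, h1⟩, h2⟩; exact ⟨h1, h2⟩
        unfold nextIn
        rw [heq2]
      have hins : T.erase (T.max' hT) = insert a (T'.erase (T'.max' hT')) := by
        rw [hmax]
        ext m
        simp only [Finset.mem_erase, Finset.mem_insert, hT'def]
        constructor
        · rintro ⟨h1, h2⟩
          by_cases hma : m = a
          · exact Or.inl hma
          · exact Or.inr ⟨h1, hma, h2⟩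
        · rintro (rfl | ⟨h1, h2, h3⟩)
          · exact ⟨fun h => hd h, hamem⟩
          · exact ⟨h1, h3⟩
      have hanotmem : a ∉ T'.erase (T'.max' hT') :=
        fun h => (Finset.mem_erase.mp (Finset.mem_of_mem_erase h)).1 rfl
      rw [hins, Finset.sum_insert hanotmem]
      have hsc : ∑ x ∈ T'.erase (T'.max' hT'), (g x - g (nextIn T x))
          = ∑ x ∈ T'.erase (T'.max' hT'), (g x - g (nextIn T' x)) :=
        Finset.sum_congr rfl (fun j hj => by rw [hnext j hj])
      rw [hsc, ih T' hsub hT', hmin', hmax]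
      ring

lemma extreme_nonneg {K : ℕ} (v : Fin K → ℝ) (hmono : StrictMono v) (hpos : ∀ i, 0 < v i)
    (S : Finset (Fin K)) (hS : S.Nonempty) (i : Fin K) : 0 ≤ extreme v S hS i := by
  unfold extreme
  by_cases hiS : i ∉ S
  · rw [if_pos hiS]
  rw [if_neg hiS]
  push_neg at hiS
  by_cases hmax : i = S.max' hS
  · rw [if_pos hmax]
    exact div_nonneg (hpos _).le (hpos _).le
  · rw [if_neg hmax]
    have hfil : (S.filter (fun j => i < j)).Nonempty :=
      ⟨S.max' hS, Finset.mem_filter.mpr ⟨S.max'_mem hS,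
        lt_of_le_of_ne (Finset.le_max' S i hiS) hmax⟩⟩
    have h1 : v i < v (nextIn S i) := hmono (nextIn_gt hfil)
    have h2 : 1 / v (nextIn S i) ≤ 1 / v i :=
      one_div_le_one_div_of_le (hpos i) h1.le
    have := (hpos (S.min' hS)).le
    nlinarith

lemma barSum_extreme {K : ℕ} (v : Fin K → ℝ) (hpos : ∀ i, 0 < v i)
    (S : Finset (Fin K)) (hS : S.Nonempty) (k : Fin K) (hk : k ∈ S) :
    barSum (extreme v S hS) k = v (S.min' hS) / v k := by
  set e := extreme v S hS with he
  set S' := S.filter (fun j => k ≤ j) with hS'def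
  have hkS' : k ∈ S' := Finset.mem_filter.mpr ⟨hk, le_rfl⟩
  have hS' : S'.Nonempty := ⟨k, hkS'⟩
  have hsub : S' ⊆ Finset.Ici k := fun m hm =>
    Finset.mem_Ici.mpr (Finset.mem_filter.mp hm).2
  have hstep : barSum e k = ∑ j ∈ S', e j := by
    rw [barSum]
    refine (Finset.sum_subset hsub ?_).symm
    intro m hm hmn
    have hmS : m ∉ S := fun hms => hmn (Finset.mem_filter.mpr ⟨hms, Finset.mem_Ici.mp hm⟩)
    rw [he, extreme, if_pos hmS]
  have hminS' : S'.min' hS' = k :=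
    le_antisymm (Finset.min'_le S' k hkS')
      (Finset.le_min' _ _ _ (fun y hy => (Finset.mem_filter.mp hy).2))
  have hmaxmem : S.max' hS ∈ S' :=
    Finset.mem_filter.mpr ⟨S.max'_mem hS, Finset.le_max' S k hk⟩
  have hmaxS' : S'.max' hS' = S.max' hS := by
    apply le_antisymm
    · exact Finset.max'_le _ _ _
        (fun y hy => Finset.le_max' S y (Finset.mem_filter.mp hy).1)
    · exact Finset.le_max' S' _ hmaxmem
  have hnext : ∀ j ∈ S'.erase (S'.max' hS'), nextIn S j = nextIn S' j := by
    intro j hj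
    have hjS' : j ∈ S' := Finset.mem_of_mem_erase hj
    have hkj : k ≤ j := (Finset.mem_filter.mp hjS').2
    have heq2 : S.filter (fun m => j < m) = S'.filter (fun m => j < m) := by
      ext m
      simp only [Finset.mem_filter, hS'def]
      constructor
      · rintro ⟨h1, h2⟩; exact ⟨⟨h1, (hkj.trans h2.le)⟩, h2⟩
      · rintro ⟨⟨h1, _⟩, h2⟩; exact ⟨h1, h2⟩
    unfold nextIn
    rw [heq2]
  have hval : ∀ j ∈ S'.erase (S'.max' hS'),
      e j = v (S.min' hS) * (1 / v j - 1 / v (nextIn S' j)) := by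
    intro j hj
    have hjS' : j ∈ S' := Finset.mem_of_mem_erase hj
    have hjS : j ∈ S := (Finset.mem_filter.mp hjS').1
    have hjne : j ≠ S.max' hS := hmaxS' ▸ (Finset.mem_erase.mp hj).1
    rw [he, extreme, if_neg (not_not.mpr hjS), if_neg hjne, hnext j hj]
  have hsplit : ∑ j ∈ S', e j = e (S'.max' hS') + ∑ j ∈ S'.erase (S'.max' hS'), e j :=
    (Finset.add_sum_erase S' e (S'.max'_mem hS')).symm
  have hemax : e (S'.max' hS') = v (S.min' hS) / v (S.max' hS) := by
    rw [hmaxS', he, extreme, if_neg (not_not.mpr (S.max'_mem hS)), if_pos rfl]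
  have htel : ∑ j ∈ S'.erase (S'.max' hS'), e j
      = v (S.min' hS) * (1 / v k - 1 / v (S.max' hS)) := by
    rw [Finset.sum_congr rfl hval, ← Finset.mul_sum]
    have h := tele (fun j => 1 / v j) S' hS'
    rw [h, hminS', hmaxS']
  rw [hstep, hsplit, hemax, htel]
  have h1 : v k ≠ 0 := (hpos k).ne'
  have h2 : v (S.max' hS) ≠ 0 := (hpos _).ne'
  field_simp
  ring

lemma rev_extreme {K : ℕ} (v : Fin K → ℝ) (hpos : ∀ i, 0 < v i)
    (S : Finset (Fin K)) (hS : S.Nonempty) (k : Fin K) (hk : k ∈ S) :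
    v k * barSum (extreme v S hS) k = v (S.min' hS) := by
  rw [barSum_extreme v hpos S hS k hk, mul_div_cancel₀ _ (hpos k).ne']

lemma tHat_nonneg {K : ℕ} (e x : Fin K → ℝ) :
    0 ≤ sInf {t : ℝ | 0 ≤ t ∧ ∃ j, e j + t * (x j - e j) < 0} :=
  Real.sInf_nonneg (fun _ ht => ht.1)

lemma tHat_notMem {K : ℕ} (e x : Fin K → ℝ) (he : ∀ k, 0 ≤ e k) :
    sInf {t : ℝ | 0 ≤ t ∧ ∃ j, e j + t * (x j - e j) < 0}
      ∉ {t : ℝ | 0 ≤ t ∧ ∃ j, e j + t * (x j - e j) < 0} := by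
  set T := {t : ℝ | 0 ≤ t ∧ ∃ j, e j + t * (x j - e j) < 0} with hT
  intro hmem
  obtain ⟨ht0, j, hj⟩ := hmem
  have hbdd : BddBelow T := ⟨0, fun t ht => ht.1⟩
  have hxe : x j < e j := by
    by_contra hge
    push_neg at hge
    nlinarith [he j]
  set c := e j / (e j - x j) with hc
  have hden : 0 < e j - x j := by linarith
  have hct : c < sInf T := by
    rw [hc, div_lt_iff₀ hden]
    nlinarith
  have hc0 : 0 ≤ c := div_nonneg (he j) hden.le
  set t' := (c + sInf T) / 2 with ht'
  have h1 : c < t' := by rw [ht']; linarith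
  have h2 : t' < sInf T := by rw [ht']; linarith
  have ht'T : t' ∈ T := by
    refine ⟨by linarith, j, ?_⟩
    have h3 : e j < t' * (e j - x j) := by
      rw [← div_lt_iff₀ hden]; exact h1
    nlinarith
  exact absurd (csInf_le hbdd ht'T) (not_le.mpr h2)

lemma greedyStep_eq {K : ℕ} (v x : Fin K → ℝ) (h : (suppF x).Nonempty)
    (hne : x ≠ extreme v (suppF x) h) :
    greedyStep v x = fun i => extreme v (suppF x) h i +
        (sInf {t : ℝ | 0 ≤ t ∧ ∃ j, extreme v (suppF x) h j
            + t * (x j - extreme v (suppF x) h j) < 0})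
          * (x i - extreme v (suppF x) h i) := by
  simp only [greedyStep, dif_pos h, if_neg hne]

lemma greedyStep_nonneg {K : ℕ} (v : Fin K → ℝ) (hmono : StrictMono v) (hpos : ∀ i, 0 < v i)
    (x : Fin K → ℝ) (hnn : ∀ k, 0 ≤ x k) (k : Fin K) : 0 ≤ greedyStep v x k := by
  by_cases h : (suppF x).Nonempty
  · by_cases heq : x = extreme v (suppF x) h
    · simp only [greedyStep, dif_pos h, if_pos heq]
      simp
    · rw [greedyStep_eq v x h heq]
      by_contra hneg
      push_neg at hneg
      exact tHat_notMem (extreme v (suppF x) h) x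
        (extreme_nonneg v hmono hpos _ h) ⟨tHat_nonneg _ _, k, hneg⟩
  · simp only [greedyStep, dif_neg h]
    simp

lemma barSum_comb {K : ℕ} (e x : Fin K → ℝ) (t : ℝ) (j : Fin K) :
    barSum (fun i => e i + t * (x i - e i)) j
      = barSum e j + t * (barSum x j - barSum e j) := by
  unfold barSum
  rw [show (fun i => e i + t * (x i - e i)) = (fun i => e i + (t * x i - t * e i)) from
    funext (fun i => by ring)]
  rw [Finset.sum_add_distrib, Finset.sum_sub_distrib, ← Finset.mul_sum, ← Finset.mul_sum]
  ring

lemma support_step {K : ℕ} (v : Fin K → ℝ) (hmono : StrictMono v)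
    (ibar : Fin K) (x : Fin K → ℝ) (hnn : ∀ k, 0 ≤ x k)
    (hR : ∀ j, ibar < j → 0 < x j → v j * barSum x j ≤ v ibar * barSum x ibar)
    (i : Fin K) (hi : ibar < i) (hxi : 0 < x i) : 0 < x ibar := by
  by_contra h0
  push_neg at h0
  have hib0 : x ibar = 0 := le_antisymm h0 (hnn ibar)
  set A := Finset.univ.filter (fun j => ibar < j ∧ 0 < x j) with hA
  have hAne : A.Nonempty := ⟨i, Finset.mem_filter.mpr ⟨Finset.mem_univ i, hi, hxi⟩⟩
  set k0 := A.min' hAne with hk0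
  have hk0A : k0 ∈ A := A.min'_mem hAne
  have hk0i : ibar < k0 := (Finset.mem_filter.mp hk0A).2.1
  have hk0pos : 0 < x k0 := (Finset.mem_filter.mp hk0A).2.2
  have hsum : barSum x ibar = barSum x k0 := by
    refine (Finset.sum_subset (Finset.Ici_subset_Ici.mpr hk0i.le) ?_).symm
    intro m hm hmn
    have h1 : ibar ≤ m := Finset.mem_Ici.mp hm
    have h2 : m < k0 := not_le.mp (fun hc => hmn (Finset.mem_Ici.mpr hc))
    rcases eq_or_lt_of_le h1 with rfl | h1'
    · exact hib0
    · by_contra hm0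
      have hmp : 0 < x m := lt_of_le_of_ne (hnn m) (Ne.symm hm0)
      have hmA : m ∈ A := Finset.mem_filter.mpr ⟨Finset.mem_univ m, h1', hmp⟩
      exact absurd (Finset.min'_le A m hmA) (not_le.mpr h2)
  have hbpos : 0 < barSum x k0 := by
    have : x k0 ≤ barSum x k0 :=
      Finset.single_le_sum (fun m _ => hnn m) (Finset.mem_Ici.mpr le_rfl)
    linarith
  have hlt : v ibar * barSum x ibar < v k0 * barSum x k0 := by
    rw [hsum]
    exact mul_lt_mul_of_pos_right (hmono hk0i) hbpos
  exact absurd (hR k0 hk0i hk0pos) (not_le.mpr hlt)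

lemma invariant {K : ℕ} (v : Fin K → ℝ) (hmono : StrictMono v) (hpos : ∀ i, 0 < v i)
    (ibar : Fin K) (x : Fin K → ℝ) (hnn : ∀ k, 0 ≤ x k)
    (hR0 : ∀ j, ibar < j → v j * barSum x j ≤ v ibar * barSum x ibar) :
    ∀ l, (∀ k, 0 ≤ resid v x l k) ∧
      (∀ j, ibar < j → 0 < resid v x l j →
        v j * barSum (resid v x l) j ≤ v ibar * barSum (resid v x l) ibar) := by
  intro l
  induction l with
  | zero => exact ⟨hnn, fun j hj _ => hR0 j hj⟩
  | succ l ih =>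
    obtain ⟨hN, hR⟩ := ih
    have hres : resid v x (l + 1) = greedyStep v (resid v x l) := rfl
    set x' := resid v x l with hx'
    constructor
    · intro k
      rw [hres]
      exact greedyStep_nonneg v hmono hpos x' hN k
    · intro j hj hyj
      rw [hres] at hyj ⊢
      by_cases h : (suppF x').Nonempty
      · by_cases heq : x' = extreme v (suppF x') h
        · exfalso
          simp only [greedyStep, dif_pos h, if_pos heq] at hyj
          simp at hyj
        · set S := suppF x' with hS
          set e := extreme v S h with he
          set t := sInf {t : ℝ | 0 ≤ t ∧ ∃ j, e j + t * (x' j - e j) < 0} with ht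
          have hge : greedyStep v x' = fun i => e i + t * (x' i - e i) :=
            greedyStep_eq v x' h heq
          have hxj : 0 < x' j := by
            rcases lt_or_eq_of_le (hN j) with h1 | h1
            · exact h1
            · exfalso
              have hjS : j ∉ S := by rw [hS, mem_suppF]; push_neg; exact h1.symm
              have hej : e j = 0 := by rw [he, extreme, if_pos hjS]
              rw [hge] at hyj
              simp only at hyj
              rw [hej, ← h1] at hyj
              simp at hyj
          have hjS : j ∈ S := by rw [hS, mem_suppF]; exact hxj.ne'
          have hibar : 0 < x' ibar :=
            support_step v hmono ibar x' hN hR j hj hxj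
          have hibarS : ibar ∈ S := by rw [hS, mem_suppF]; exact hibar.ne'
          have ht0 : 0 ≤ t := tHat_nonneg e x'
          have hA : v j * barSum e j = v (S.min' h) := rev_extreme v hpos S h j hjS
          have hB : v ibar * barSum e ibar = v (S.min' h) := rev_extreme v hpos S h ibar hibarS
          have hC : v j * barSum x' j ≤ v ibar * barSum x' ibar := hR j hj hxj
          rw [hge, barSum_comb, barSum_comb]
          have e1 : v j * (barSum e j + t * (barSum x' j - barSum e j))
              = (1 - t) * (v j * barSum e j) + t * (v j * barSum x' j) := by ring
          have e2 : v ibar * (barSum e ibar + t * (barSum x' ibar - barSum e ibar))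
              = (1 - t) * (v ibar * barSum e ibar) + t * (v ibar * barSum x' ibar) := by
            ring
          rw [e1, e2, hA, hB]
          have := mul_le_mul_of_nonneg_left hC ht0
          linarith
      · exfalso
        simp only [greedyStep, dif_neg h] at hyj
        simp at hyj

/-- along the greedy algorithm, if the residual has mass on a valuation
above v_ī, then it has mass on v_ī itself. -/
theorem residual_mass_at_ibar {K : ℕ} (v : Fin K → ℝ) (hmono : StrictMono v)
    (hpos : ∀ i, 0 < v i) (x : Fin K → ℝ) (hx : IsMarket x)
    (istar : Fin K) (histar : LargestOptimal v x istar)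
    (hIoi : (Finset.Ioi istar).Nonempty)
    (ibar : Fin K) (hibar1 : istar < ibar)
    (hibar2 : ∀ j, istar < j → v j * barSum x j ≤ v ibar * barSum x ibar)
    (hibar3 : ∀ j, istar < j → v j * barSum x j = v ibar * barSum x ibar → j ≤ ibar)
    (l : ℕ) (i : Fin K) (hi : ibar < i) (hpos' : 0 < resid v x l i) :
    0 < resid v x l ibar := by
  have hR0 : ∀ j, ibar < j → v j * barSum x j ≤ v ibar * barSum x ibar :=
    fun j hj => hibar2 j (hibar1.trans hj)
  obtain ⟨hN, hR⟩ := invariant v hmono hpos ibar x hx.1 hR0 l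
  exact support_step v hmono ibar (resid v x l) hN hR i hi hpos'
end
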